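/- Let G be a relation graph, T(L) a G-realization, T(R) ∈ B_G(T(L)), and (k,i) with 1 ≤ i ≤ k ≤ n−1. (a) If T(R+δ^{ki}) ∈ B_G(T(L)) and E⁺_{G(R)} ⊆ E⁺_{G(R+δ^{ki})}, then ∏_{j=1}^{k+1}(r_{ki} − r_{k+1,j}) ≠ 0; hence T(R+δ^{ki}) appears with nonzero coefficient in E_{k,k+1}(T(R)), i.e., T(R) ≼_(1) T(R+δ^{ki}). (b) If T(R−δ^{ki}) ∈ B_G(T(L)) and E⁺_{G(R)} ⊆ E⁺_{G(R−δ^{ki})}, then ∏_{j=1}^{k−1}(r_{ki} − r_{k−1,j}) ≠ 0; hence T(R−δ^{ki}) appears with nonzero coefficient in E_{k+1,k}(T(R)), i.e., T(R) ≼_(1) T(R−δ^{ki}). -/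

import Mathlib

namespace GT

/-- A Gelfand–Tsetlin tableau: an assignment of a complex number to each position `(i,j)`.
Only positions in the vertex set `Vtx n` are relevant. -/
abbrev Tableau := ℕ × ℕ → ℂ

/-- The vertex set `𝔙 = {(i,j) : 1 ≤ j ≤ i ≤ n}`. -/
def Vtx (n : ℕ) : Set (ℕ × ℕ) := {p | 1 ≤ p.2 ∧ p.2 ≤ p.1 ∧ p.1 ≤ n}

/-- `z ∈ ℤ_{≥0}` (as a complex number). -/
def IsNonnegInt (z : ℂ) : Prop := ∃ m : ℕ, z = (m : ℂ)

/-- `z ∈ ℤ_{>0}` (as a complex number). -/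
def IsPosInt (z : ℂ) : Prop := ∃ m : ℕ, z = (m : ℂ) + 1

/-- `z ∈ ℤ` (as a complex number). -/
def IsInt (z : ℂ) : Prop := ∃ m : ℤ, z = (m : ℂ)

/-- The arrow relation of the graph `G(M)` associated with a tableau `M`. -/
def graphOf (n : ℕ) (M : Tableau) : (ℕ × ℕ) → (ℕ × ℕ) → Prop := fun a b =>
  a ∈ Vtx n ∧ b ∈ Vtx n ∧
    ((a.1 = b.1 + 1 ∧ IsNonnegInt (M a - M b)) ∨
     (b.1 = a.1 + 1 ∧ IsPosInt (M a - M b)) ∨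
     (a.1 = n ∧ b.1 = n ∧ a.2 ≠ b.2 ∧ IsNonnegInt (M a - M b)))

/-- The arrow relation of `Ḡ`: an arrow `a → b` iff there is a directed path in `G`
from `a` to `b` with `|a.1 - b.1| = 1`, or `a, b` are distinct vertices in row `n`. -/
def bar (n : ℕ) (E : (ℕ × ℕ) → (ℕ × ℕ) → Prop) : (ℕ × ℕ) → (ℕ × ℕ) → Prop := fun a b =>
  (Relation.TransGen E a b ∧ (a.1 = b.1 + 1 ∨ b.1 = a.1 + 1)) ∨
  (a ∈ Vtx n ∧ b ∈ Vtx n ∧ a.1 = n ∧ b.1 = n ∧ a.2 ≠ b.2)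

/-- The graph difference `G ∖ H` (on arrow relations). -/
def gdiff (E F : (ℕ × ℕ) → (ℕ × ℕ) → Prop) : (ℕ × ℕ) → (ℕ × ℕ) → Prop :=
  fun a b => E a b ∧ ¬ F a b

/-- `E⁺_H`: the set of arrows of `H` pointing down (from row `k+1` to row `k`). -/
def Eplus (E : (ℕ × ℕ) → (ℕ × ℕ) → Prop) : Set ((ℕ × ℕ) × (ℕ × ℕ)) :=
  {p | E p.1 p.2 ∧ p.1.1 = p.2.1 + 1}

/-- `𝔙_H`: the set of vertices incident to some arrow of `H`. -/
def VtxOf (E : (ℕ × ℕ) → (ℕ × ℕ) → Prop) : Set (ℕ × ℕ) :=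
  {a | (∃ b, E a b) ∨ (∃ b, E b a)}

/-- `((k,i),(k,j))` is an adjoining pair of vertices in the graph with arrow relation `E`. -/
def Adjoining (n : ℕ) (E : (ℕ × ℕ) → (ℕ × ℕ) → Prop) (k i j : ℕ) : Prop :=
  1 ≤ i ∧ i < j ∧ j ≤ k ∧ k ≤ n - 1 ∧ Relation.TransGen E (k, i) (k, j) ∧
    ∀ t, i < t → t < j →
      ¬ Relation.TransGen E (k, i) (k, t) ∧ ¬ Relation.TransGen E (k, t) (k, j)

/-- The arrow relation `E` is a relation graph on `𝔙`. -/
def IsRelationGraph (n : ℕ) (E : (ℕ × ℕ) → (ℕ × ℕ) → Prop) : Prop :=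
  -- (i) arrows join vertices of 𝔙 in consecutive rows, or two distinct vertices in row n
  (∀ a b, E a b → a ∈ Vtx n ∧ b ∈ Vtx n ∧
      (a.1 = b.1 + 1 ∨ b.1 = a.1 + 1 ∨ (a.1 = n ∧ b.1 = n ∧ a.2 ≠ b.2))) ∧
  -- (ii) no directed path from (k,j) to (k,i) for 1 ≤ i < j ≤ k
  (∀ k i j : ℕ, 1 ≤ i → i < j → j ≤ k → ¬ Relation.TransGen E (k, j) (k, i)) ∧
  -- (iii) no oriented cycles
  (∀ a, ¬ Relation.TransGen E a a) ∧
  -- (iv) vertices in a row k < n in the same connected component are joined by a directed path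
  (∀ k i j : ℕ, k < n → (k, i) ∈ Vtx n → (k, j) ∈ Vtx n → i ≠ j →
      Relation.EqvGen E (k, i) (k, j) →
      Relation.TransGen E (k, i) (k, j) ∨ Relation.TransGen E (k, j) (k, i)) ∧
  -- (v) no crossing pair of down arrows
  (∀ k r s i j : ℕ, r < s → i < j → ¬ (E (k+1, r) (k, j) ∧ E (k+1, s) (k, i))) ∧
  -- (vi) condition on adjoining pairs
  (∀ k i j : ℕ, Adjoining n E k i j →
      (∃ p q, E (k, i) (k+1, p) ∧ E (k+1, p) (k, j) ∧
              E (k, i) (k-1, q) ∧ E (k-1, q) (k, j)) ∨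
      (∃ s t, s < t ∧ E (k, i) (k+1, s) ∧ E (k+1, t) (k, j)))

/-- The tableau `M` satisfies the graph with arrow relation `E`. -/
def Satisfies (n : ℕ) (M : Tableau) (E : (ℕ × ℕ) → (ℕ × ℕ) → Prop) : Prop :=
  ∀ i j r s : ℕ, E (i, j) (r, s) →
    ((i = r + 1 ∨ (i = n ∧ r = n ∧ j < s)) → IsNonnegInt (M (i, j) - M (r, s))) ∧
    (r = i + 1 → IsPosInt (M (i, j) - M (r, s)))

/-- The tableau `M` is a `G`-realization, for `G` the graph with arrow relation `E`. -/
def IsRealization (n : ℕ) (E : (ℕ × ℕ) → (ℕ × ℕ) → Prop) (M : Tableau) : Prop :=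
  Satisfies n M E ∧
  ∀ k i j : ℕ, k ≤ n - 1 → (k, i) ∈ Vtx n → (k, j) ∈ Vtx n → i ≠ j →
    IsInt (M (k, i) - M (k, j)) → Relation.EqvGen E (k, i) (k, j)

/-- `z ∈ ℤ₀`: an integral vector indexed by `𝔙` vanishing on row `n`. -/
def ZZ0 (n : ℕ) (z : ℕ × ℕ → ℤ) : Prop :=
  (∀ i, z (n, i) = 0) ∧ ∀ p, p ∉ Vtx n → z p = 0

/-- The tableau `T(M + z)`. -/
def addZ (M : Tableau) (z : ℕ × ℕ → ℤ) : Tableau := fun p => M p + (z p : ℂ)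

/-- The vector `c · δ^v ∈ ℤ₀`. -/
def sing (v : ℕ × ℕ) (c : ℤ) : ℕ × ℕ → ℤ := fun p => if p = v then c else 0

/-- `B_G(T(L))`: the set of all `G`-realizations of the form `T(L+z)` with `z ∈ ℤ₀`. -/
def BG (n : ℕ) (E : (ℕ × ℕ) → (ℕ × ℕ) → Prop) (L : Tableau) : Set Tableau :=
  {M | ∃ z : ℕ × ℕ → ℤ, ZZ0 n z ∧ M = addZ L z ∧ IsRealization n E M}

/-- The coefficient of `T(M + δ^{ki})` in `E_{k,k+1}(T(M))`. -/
noncomputable def raiseCoeff (M : Tableau) (k i : ℕ) : ℂ :=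
  -((∏ j ∈ Finset.Icc 1 (k+1), (M (k, i) - M (k+1, j))) /
    (∏ j ∈ (Finset.Icc 1 k).erase i, (M (k, i) - M (k, j))))

/-- The coefficient of `T(M - δ^{ki})` in `E_{k+1,k}(T(M))`. -/
noncomputable def lowerCoeff (M : Tableau) (k i : ℕ) : ℂ :=
  (∏ j ∈ Finset.Icc 1 (k-1), (M (k, i) - M (k-1, j))) /
    (∏ j ∈ (Finset.Icc 1 k).erase i, (M (k, i) - M (k, j)))

/-- The eigenvalue of `E_{kk}` on `T(M)`. -/
noncomputable def diagCoeff (M : Tableau) (k : ℕ) : ℂ :=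
  ((k : ℂ) - 1) + (∑ i ∈ Finset.Icc 1 k, M (k, i)) - (∑ i ∈ Finset.Icc 1 (k-1), M (k-1, i))

/-- The tableau `T(M + c·δ^{ki})`. -/
def shift (M : Tableau) (k i : ℕ) (c : ℤ) : Tableau :=
  fun p => M p + if p = (k, i) then (c : ℂ) else 0

/-- The basis vector of `M` in the space with basis `B`, or `0` if `M ∉ B`. -/
noncomputable def emb (B : Set Tableau) (M : Tableau) : (↥B →₀ ℂ) := by
  classical exact if h : M ∈ B then Finsupp.single (⟨M, h⟩ : ↥B) 1 else 0

/-- The Gelfand–Tsetlin operator `E_{k,k+1}` on the space with basis `B`. -/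
noncomputable def raiseOp (B : Set Tableau) (k : ℕ) : (↥B →₀ ℂ) →ₗ[ℂ] (↥B →₀ ℂ) :=
  Finsupp.lsum ℂ fun T => LinearMap.toSpanSingleton ℂ _
    (∑ i ∈ Finset.Icc 1 k, raiseCoeff (T : Tableau) k i • emb B (shift (T : Tableau) k i 1))

/-- The Gelfand–Tsetlin operator `E_{k+1,k}` on the space with basis `B`. -/
noncomputable def lowerOp (B : Set Tableau) (k : ℕ) : (↥B →₀ ℂ) →ₗ[ℂ] (↥B →₀ ℂ) :=
  Finsupp.lsum ℂ fun T => LinearMap.toSpanSingleton ℂ _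
    (∑ i ∈ Finset.Icc 1 k, lowerCoeff (T : Tableau) k i • emb B (shift (T : Tableau) k i (-1)))

/-- The Gelfand–Tsetlin operator `E_{kk}` on the space with basis `B`. -/
noncomputable def diagOp (B : Set Tableau) (k : ℕ) : (↥B →₀ ℂ) →ₗ[ℂ] (↥B →₀ ℂ) :=
  Finsupp.lsum ℂ fun T => LinearMap.toSpanSingleton ℂ _
    (diagCoeff (T : Tableau) k • Finsupp.single T (1 : ℂ))

/-- A subspace of the space with basis `B` is a submodule if it is invariant under all the
Gelfand–Tsetlin operators `E_{k,k+1}`, `E_{k+1,k}` (1 ≤ k ≤ n-1) and `E_{kk}` (1 ≤ k ≤ n). -/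
def IsSubmoduleGT (n : ℕ) (B : Set Tableau) (W : Submodule ℂ (↥B →₀ ℂ)) : Prop :=
  (∀ k, 1 ≤ k → k ≤ n - 1 → ∀ v ∈ W, raiseOp B k v ∈ W ∧ lowerOp B k v ∈ W) ∧
  (∀ k, 1 ≤ k → k ≤ n → ∀ v ∈ W, diagOp B k v ∈ W)

/-- `U · T(R)`: the smallest submodule containing the basis tableau `T`. -/
noncomputable def genSub (n : ℕ) (B : Set Tableau) (T : ↥B) : Submodule ℂ (↥B →₀ ℂ) :=
  sInf {W | IsSubmoduleGT n B W ∧ Finsupp.single T 1 ∈ W}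

/-- `T(R) ≼₍₁₎ T(Q)`: the tableau `Q` appears with nonzero coefficient in `g · T(R)` for one
of the Gelfand–Tsetlin operators `g`. -/
def Prec1 (n : ℕ) (B : Set Tableau) (R Q : ↥B) : Prop :=
  (∃ k, 1 ≤ k ∧ k ≤ n - 1 ∧
    ((raiseOp B k (Finsupp.single R 1)) Q ≠ 0 ∨ (lowerOp B k (Finsupp.single R 1)) Q ≠ 0)) ∨
  (∃ k, 1 ≤ k ∧ k ≤ n ∧ (diagOp B k (Finsupp.single R 1)) Q ≠ 0)

/-!
In a realization, two entries of a row `k < n` whose difference is an integer lie on a directed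
path of `G`, and along such a path the entries drop by a natural number that is positive unless
every step goes down or stays in row `n`; so the entries of row `k` are pairwise distinct and the
Gelfand–Tsetlin denominators do not vanish. A vanishing numerator factor `r_{ki} = r_{k±1,j}` is a
down arrow of `G(R)` with difference `0`; moving `r_{ki}` by `±1` turns that difference into `-1`,
so the arrow is missing from `G(R ± δ^{ki})`.
-/

lemma not_isNonnegInt_neg_one : ¬ IsNonnegInt (-1 : ℂ) := by
  rintro ⟨m, hm⟩
  have h : ((m + 1 : ℕ) : ℂ) = 0 := by push_cast; linear_combination -hm
  exact m.succ_ne_zero (Nat.cast_eq_zero.mp h)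

section Arrows

variable {n : ℕ} {E : (ℕ × ℕ) → (ℕ × ℕ) → Prop} {M : Tableau}

lemma Satisfies.exists_natCast_of_arrow (hE : IsRelationGraph n E) (hM : Satisfies n M E)
    {a b : ℕ × ℕ} (h : E a b) :
    ∃ N : ℕ, M a - M b = N ∧ (N = 0 → b.1 < a.1 ∨ (a.1 = n ∧ b.1 = n)) := by
  obtain ⟨ha, hb, hrow⟩ := hE.1 a b h
  have hsat := hM a.1 a.2 b.1 b.2 h
  rcases hrow with hdown | hup | ⟨han, hbn, hne⟩
  · obtain ⟨m, hm⟩ := hsat.1 (Or.inl hdown)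
    exact ⟨m, hm, fun _ => Or.inl (by omega)⟩
  · obtain ⟨m, hm⟩ := hsat.2 hup
    exact ⟨m + 1, by push_cast; exact hm, by omega⟩
  · -- condition (ii) orients every arrow inside row `n` from left to right
    have hlt : a.2 < b.2 := by
      refine hne.lt_or_gt.resolve_right fun hgt =>
        hE.2.1 n b.2 a.2 hb.1 hgt (han ▸ ha.2.1) (.single ?_)
      convert h using 1 <;> ext <;> simp [han, hbn]
    obtain ⟨m, hm⟩ := hsat.1 (Or.inr ⟨han, hbn, hlt⟩)
    exact ⟨m, hm, fun _ => Or.inr ⟨han, hbn⟩⟩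

lemma Satisfies.exists_natCast_of_transGen (hE : IsRelationGraph n E) (hM : Satisfies n M E)
    {a b : ℕ × ℕ} (h : Relation.TransGen E a b) :
    ∃ N : ℕ, M a - M b = N ∧ (N = 0 → b.1 < a.1 ∨ (a.1 = n ∧ b.1 = n)) := by
  induction h with
  | single h => exact hM.exists_natCast_of_arrow hE h
  | tail _ hbc ih =>
    obtain ⟨N₁, h₁, h₁'⟩ := ih
    obtain ⟨N₂, h₂, h₂'⟩ := hM.exists_natCast_of_arrow hE hbc
    refine ⟨N₁ + N₂, by push_cast; linear_combination h₁ + h₂, fun h0 => ?_⟩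
    rcases h₁' (by omega) with h | h <;> rcases h₂' (by omega) with h' | h' <;> omega

lemma Satisfies.apply_ne_of_transGen (hE : IsRelationGraph n E) (hM : Satisfies n M E)
    {k i j : ℕ} (hk : k ≠ n) (h : Relation.TransGen E (k, i) (k, j)) :
    M (k, i) ≠ M (k, j) := by
  obtain ⟨N, hN, hN0⟩ := hM.exists_natCast_of_transGen hE h
  intro heq
  rw [heq, sub_self, eq_comm, Nat.cast_eq_zero] at hN
  rcases hN0 hN with h | h <;> simp_all

lemma IsRealization.apply_ne (hE : IsRelationGraph n E) (hM : IsRealization n E M)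
    {k i j : ℕ} (hk : k < n) (hi : (k, i) ∈ Vtx n) (hj : (k, j) ∈ Vtx n) (hij : i ≠ j) :
    M (k, i) ≠ M (k, j) := by
  have hint : IsInt (M (k, i) - M (k, j)) → Relation.EqvGen E (k, i) (k, j) :=
    hM.2 k i j (by omega) hi hj hij
  intro heq
  rcases hE.2.2.2.1 k i j hk hi hj hij (hint ⟨0, by simp [heq]⟩) with h | h
  · exact hM.1.apply_ne_of_transGen hE hk.ne h heq
  · exact hM.1.apply_ne_of_transGen hE hk.ne h heq.symm

lemma IsRealization.prod_erase_sub_ne_zero (hE : IsRelationGraph n E)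
    (hM : IsRealization n E M) {k i : ℕ} (hk : k < n) (hi : (k, i) ∈ Vtx n) :
    ∏ j ∈ (Finset.Icc 1 k).erase i, (M (k, i) - M (k, j)) ≠ 0 := by
  refine Finset.prod_ne_zero_iff.2 fun j hj => sub_ne_zero.2 ?_
  obtain ⟨hji, hj⟩ := Finset.mem_erase.1 hj
  obtain ⟨hj1, hjk⟩ := Finset.mem_Icc.1 hj
  exact hM.apply_ne hE hk hi ⟨hj1, hjk, hk.le⟩ (Ne.symm hji)

end Arrows

lemma mem_Eplus_graphOf_iff {n : ℕ} {M : Tableau} {a b : ℕ × ℕ} (ha : a ∈ Vtx n)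
    (hb : b ∈ Vtx n) (hab : a.1 = b.1 + 1) :
    (a, b) ∈ Eplus (graphOf n M) ↔ IsNonnegInt (M a - M b) := by
  simp only [Eplus, Set.mem_ofPred_eq, graphOf, ha, hb, hab, true_and, and_true]
  constructor
  · rintro (h | ⟨hba, -⟩ | ⟨han, hbn, -⟩)
    · exact h
    · omega
    · omega
  · exact .inl

lemma apply_ne_of_Eplus_subset {n : ℕ} {M M' : Tableau}
    (hsub : Eplus (graphOf n M) ⊆ Eplus (graphOf n M')) {a b : ℕ × ℕ} (ha : a ∈ Vtx n)
    (hb : b ∈ Vtx n) (hab : a.1 = b.1 + 1) (h' : M' a - M' b = M a - M b - 1) :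
    M a ≠ M b := by
  intro heq
  have hmem := hsub ((mem_Eplus_graphOf_iff ha hb hab).2 ⟨0, by simp [heq]⟩)
  rw [mem_Eplus_graphOf_iff ha hb hab, h', heq, sub_self, zero_sub] at hmem
  exact not_isNonnegInt_neg_one hmem

section Shift

variable {M : Tableau} {k i : ℕ} {c : ℤ}

@[simp]
lemma shift_apply_self : shift M k i c (k, i) = M (k, i) + c := by
  simp [shift]

lemma shift_apply_of_ne {p : ℕ × ℕ} (hp : p ≠ (k, i)) : shift M k i c p = M p := by
  simp [shift, hp]

lemma shift_eq_shift_iff (hc : c ≠ 0) {j : ℕ} : shift M k i c = shift M k j c ↔ i = j := by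
  refine ⟨fun h => ?_, fun h => h ▸ rfl⟩
  by_contra hij
  have h := congrFun h (k, i)
  rw [shift_apply_self, shift_apply_of_ne (by simpa using hij)] at h
  exact hc (by exact_mod_cast add_eq_left.1 h)

lemma prod_sub_succ_row_ne_zero {n : ℕ}
    (hsub : Eplus (graphOf n M) ⊆ Eplus (graphOf n (shift M k i 1))) (hi : (k, i) ∈ Vtx n)
    (hk : k < n) :
    ∏ j ∈ Finset.Icc 1 (k + 1), (M (k, i) - M (k + 1, j)) ≠ 0 := by
  refine Finset.prod_ne_zero_iff.2 fun j hj => sub_ne_zero.2 (Ne.symm ?_)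
  obtain ⟨hj1, hjk⟩ := Finset.mem_Icc.1 hj
  refine apply_ne_of_Eplus_subset hsub ⟨hj1, hjk, hk⟩ hi rfl ?_
  rw [shift_apply_self, shift_apply_of_ne (by simp)]
  push_cast; ring

lemma prod_sub_pred_row_ne_zero {n : ℕ}
    (hsub : Eplus (graphOf n M) ⊆ Eplus (graphOf n (shift M k i (-1)))) (hi : (k, i) ∈ Vtx n) :
    ∏ j ∈ Finset.Icc 1 (k - 1), (M (k, i) - M (k - 1, j)) ≠ 0 := by
  refine Finset.prod_ne_zero_iff.2 fun j hj => sub_ne_zero.2 ?_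
  obtain ⟨hj1, hjk⟩ := Finset.mem_Icc.1 hj
  have hkn := hi.2.2
  refine apply_ne_of_Eplus_subset hsub hi ⟨hj1, hjk, by omega⟩
    (show k = k - 1 + 1 by omega) ?_
  rw [shift_apply_self, shift_apply_of_ne (by simp only [ne_eq, Prod.mk.injEq]; omega)]
  push_cast; ring

end Shift

section Operators

variable {B : Set Tableau} {R : Tableau} {k i : ℕ}

open Classical in
lemma emb_apply (M : Tableau) (Q : ↥B) : emb B M Q = if (Q : Tableau) = M then 1 else 0 := by
  unfold emb
  split_ifs with hM hQ hQ
  · rw [Finsupp.single_apply, if_pos (Subtype.ext hQ.symm)]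
  · rw [Finsupp.single_apply, if_neg fun h => hQ (congrArg Subtype.val h).symm]
  · exact absurd (hQ ▸ Q.2) hM
  · rfl

lemma sum_smul_emb_shift_apply {c : ℤ} (hc : c ≠ 0) (hi : i ∈ Finset.Icc 1 k)
    (hB : shift R k i c ∈ B) (coef : ℕ → ℂ) :
    (∑ j ∈ Finset.Icc 1 k, coef j • emb B (shift R k j c)) ⟨shift R k i c, hB⟩ =
      coef i := by
  simp [Finsupp.finsetSum_apply, emb_apply, shift_eq_shift_iff hc, hi]

lemma raiseOp_single_apply_shift (hR : R ∈ B) (hi : i ∈ Finset.Icc 1 k)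
    (hB : shift R k i 1 ∈ B) :
    raiseOp B k (Finsupp.single ⟨R, hR⟩ 1) ⟨shift R k i 1, hB⟩ = raiseCoeff R k i := by
  simp only [raiseOp, Finsupp.lsum_single, LinearMap.toSpanSingleton_apply, one_smul]
  exact sum_smul_emb_shift_apply one_ne_zero hi hB _

lemma lowerOp_single_apply_shift (hR : R ∈ B) (hi : i ∈ Finset.Icc 1 k)
    (hB : shift R k i (-1) ∈ B) :
    lowerOp B k (Finsupp.single ⟨R, hR⟩ 1) ⟨shift R k i (-1), hB⟩ = lowerCoeff R k i := by
  simp only [lowerOp, Finsupp.lsum_single, LinearMap.toSpanSingleton_apply, one_smul]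
  exact sum_smul_emb_shift_apply (by norm_num) hi hB _

end Operators

theorem single_step_generation_general
    (n : ℕ) (E : (ℕ × ℕ) → (ℕ × ℕ) → Prop) (hE : IsRelationGraph n E)
    (L : Tableau)
    (R : Tableau) (hR : R ∈ BG n E L)
    (k i : ℕ) (hi : 1 ≤ i) (hik : i ≤ k) (hk : k ≤ n - 1) :
    (∀ ha : shift R k i 1 ∈ BG n E L,
      Eplus (graphOf n R) ⊆ Eplus (graphOf n (shift R k i 1)) →
      (∏ j ∈ Finset.Icc 1 (k+1), (R (k, i) - R (k+1, j))) ≠ 0 ∧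
      (raiseOp (BG n E L) k (Finsupp.single (⟨R, hR⟩ : ↥(BG n E L)) 1))
          (⟨shift R k i 1, ha⟩ : ↥(BG n E L)) ≠ 0) ∧
    (∀ hb : shift R k i (-1) ∈ BG n E L,
      Eplus (graphOf n R) ⊆ Eplus (graphOf n (shift R k i (-1))) →
      (∏ j ∈ Finset.Icc 1 (k-1), (R (k, i) - R (k-1, j))) ≠ 0 ∧
      (lowerOp (BG n E L) k (Finsupp.single (⟨R, hR⟩ : ↥(BG n E L)) 1))
          (⟨shift R k i (-1), hb⟩ : ↥(BG n E L)) ≠ 0) := by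
  obtain ⟨-, -, -, hRreal⟩ := id hR
  have hkn : k < n := by omega
  have hki : (k, i) ∈ Vtx n := ⟨hi, hik, hkn.le⟩
  have hiIcc : i ∈ Finset.Icc 1 k := Finset.mem_Icc.2 ⟨hi, hik⟩
  have hden := hRreal.prod_erase_sub_ne_zero hE hkn hki
  refine ⟨fun ha hsub => ?_, fun hb hsub => ?_⟩
  · have hnum := prod_sub_succ_row_ne_zero hsub hki hkn
    refine ⟨hnum, ?_⟩
    rw [raiseOp_single_apply_shift hR hiIcc ha, raiseCoeff]
    exact neg_ne_zero.2 (div_ne_zero hnum hden)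
  · have hnum := prod_sub_pred_row_ne_zero hsub hki
    refine ⟨hnum, ?_⟩
    rw [lowerOp_single_apply_shift hR hiIcc hb, lowerCoeff]
    exact div_ne_zero hnum hden

/-- Single-step generation: if `T(R±δ^{ki})` lies in `B_G(T(L))` and adding/subtracting
`δ^{ki}` preserves the down arrows, then the corresponding Gelfand–Tsetlin numerator is
nonzero, so `T(R±δ^{ki})` appears with nonzero coefficient in `E_{k,k+1}(T(R))`
(resp. `E_{k+1,k}(T(R))`), i.e. `T(R) ≼₍₁₎ T(R±δ^{ki})`. -/
theorem single_step_generation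
    (n : ℕ) (hn : 2 ≤ n) (E : (ℕ × ℕ) → (ℕ × ℕ) → Prop) (hE : IsRelationGraph n E)
    (L : Tableau) (hL : IsRealization n E L)
    (R : Tableau) (hR : R ∈ BG n E L)
    (k i : ℕ) (hi : 1 ≤ i) (hik : i ≤ k) (hk : k ≤ n - 1) :
    (∀ ha : shift R k i 1 ∈ BG n E L,
      Eplus (graphOf n R) ⊆ Eplus (graphOf n (shift R k i 1)) →
      (∏ j ∈ Finset.Icc 1 (k+1), (R (k, i) - R (k+1, j))) ≠ 0 ∧
      (raiseOp (BG n E L) k (Finsupp.single (⟨R, hR⟩ : ↥(BG n E L)) 1))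
          (⟨shift R k i 1, ha⟩ : ↥(BG n E L)) ≠ 0) ∧
    (∀ hb : shift R k i (-1) ∈ BG n E L,
      Eplus (graphOf n R) ⊆ Eplus (graphOf n (shift R k i (-1))) →
      (∏ j ∈ Finset.Icc 1 (k-1), (R (k, i) - R (k-1, j))) ≠ 0 ∧
      (lowerOp (BG n E L) k (Finsupp.single (⟨R, hR⟩ : ↥(BG n E L)) 1))
          (⟨shift R k i (-1), hb⟩ : ↥(BG n E L)) ≠ 0) :=
  single_step_generation_general n E hE L R hR k i hi hik hk
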